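/- arXiv:1102.2086 — 4 statements merged into one kernel-verified Lean document; each statement's English description precedes it below -/
import Mathlib

section
/- Let G be a 2-connected cubic graph, and let P be a path of minimum length among all paths whose two endvertices separate G, with endvertices x and y. Then the component C of G - {x,y} containing the interior of P receives exactly four edges from {x,y} (two from x and two from y). -/
/-!
The successor `v` of `x` on `P` lies in `C`. Since `G - y` is connected, `x` has a neighbour in
every component of `G - {x, y}`, in particular in one other than `C`, so cubicity leaves at most
two neighbours of `x` in `C`. If `v` were the only one, then `{v, y}` would separate `x` from the
neighbours of `v` in `C` outside `{x, y}`, and the tail of `P` would be a shorter path with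
separating endpoints. The same argument applies to `y` along the reversed path.
-/

open SimpleGraph

/-- A set `S` of vertices separates `G` if deleting `S` leaves a disconnected graph. -/
def Separates {V : Type*} (G : SimpleGraph V) (S : Set V) : Prop :=
  ¬ (G.induce (Sᶜ : Set V)).Preconnected

/-- `G` is 2-connected: connected, more than 2 vertices, and no cutvertex. -/
def TwoConnected {V : Type*} (G : SimpleGraph V) : Prop :=
  (∃ a b c : V, a ≠ b ∧ a ≠ c ∧ b ≠ c) ∧ G.Connected ∧
    ∀ v : V, (G.induce ({v}ᶜ : Set V)).Connected

/-- `G` is cubic: every vertex has exactly 3 neighbours. -/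
def IsCubic {V : Type*} (G : SimpleGraph V) : Prop :=
  ∀ v : V, (G.neighborSet v).ncard = 3

namespace SimpleGraph

variable {V : Type*} {G : SimpleGraph V} {S : Set V}

def neighborSetInComponent (G : SimpleGraph V) (C : (G.induce Sᶜ).ConnectedComponent) (u : V) :
    Set V :=
  {b | G.Adj u b ∧ ∃ h : b ∈ Sᶜ, (G.induce Sᶜ).connectedComponentMk ⟨b, h⟩ = C}

lemma neighborSetInComponent_subset (C : (G.induce Sᶜ).ConnectedComponent) (u : V) :
    G.neighborSetInComponent C u ⊆ G.neighborSet u :=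
  fun _ hb => hb.1

lemma disjoint_neighborSetInComponent {C D : (G.induce Sᶜ).ConnectedComponent} (hCD : C ≠ D)
    (u : V) : Disjoint (G.neighborSetInComponent C u) (G.neighborSetInComponent D u) :=
  Set.disjoint_left.2 fun _ ⟨_, _, hC⟩ ⟨_, _, hD⟩ => hCD (hC.symm.trans hD)

lemma exists_ne_connectedComponent_of_separates (hsep : Separates G S)
    (C : (G.induce Sᶜ).ConnectedComponent) : ∃ D, D ≠ C := by
  by_contra! h
  exact hsep fun a b => ConnectedComponent.exact ((h _).trans (h _).symm)

/-- A walk from `D` to `u` avoiding `S \ {u}` leaves `D` through an edge at `u`. -/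
lemma neighborSetInComponent_nonempty {u : V} (hu : u ∈ S)
    (hconn : (G.induce (S \ {u})ᶜ).Preconnected) (D : (G.induce Sᶜ).ConnectedComponent) :
    (G.neighborSetInComponent D u).Nonempty := by
  obtain ⟨w, rfl⟩ := D.exists_rep
  obtain ⟨W⟩ := hconn ⟨w, fun h => w.2 h.1⟩ ⟨u, fun h => h.2 rfl⟩
  obtain ⟨⟨⟨⟨a, _⟩, ⟨b, hbu⟩⟩, hab⟩, -, ⟨haS, haD⟩, hbD⟩ := W.exists_boundary_dart
    {z | ∃ h : z.1 ∈ Sᶜ, (G.induce Sᶜ).connectedComponentMk ⟨z.1, h⟩ =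
      (G.induce Sᶜ).connectedComponentMk w} ⟨w.2, rfl⟩ fun ⟨h, _⟩ => h hu
  by_cases hb : b = u
  · subst hb
    exact ⟨a, hab.symm, haS, haD⟩
  · have hbS : b ∈ Sᶜ := fun h => hbu ⟨h, hb⟩
    refine absurd ⟨hbS, ?_⟩ hbD
    rw [← haD]
    exact (ConnectedComponent.sound
      (Adj.reachable (show (G.induce Sᶜ).Adj ⟨a, haS⟩ ⟨b, hbS⟩ from hab))).symm

/-- Starting at `u` and avoiding `v`, a walk that misses `S \ {u}` never enters `C`. -/
lemma separates_insert_sdiff_singleton {u v c : V} (hu : u ∈ S) (huv : G.Adj u v)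
    {C : (G.induce Sᶜ).ConnectedComponent} (huniq : ∀ b ∈ G.neighborSetInComponent C u, b = v)
    (hcS : c ∈ Sᶜ) (hcC : (G.induce Sᶜ).connectedComponentMk ⟨c, hcS⟩ = C) (hcv : c ≠ v) :
    Separates G (insert v (S \ {u})) := by
  intro hconn
  obtain ⟨W⟩ := hconn ⟨u, fun h => h.elim huv.ne fun h => h.2 rfl⟩
    ⟨c, fun h => h.elim hcv fun h => hcS h.1⟩
  obtain ⟨⟨⟨⟨a, _⟩, ⟨b, hbT⟩⟩, hab⟩, -, ha, hb⟩ := W.exists_boundary_dart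
    {z | z.1 = u ∨ ∃ h : z.1 ∈ Sᶜ, (G.induce Sᶜ).connectedComponentMk ⟨z.1, h⟩ ≠ C}
    (Or.inl rfl) (by simp [hcC, show c ≠ u from fun h => hcS (h ▸ hu)])
  simp only [Set.mem_ofPred_eq, not_or, not_exists, not_not] at ha hb
  obtain ⟨hbu, hbC⟩ := hb
  have hbS : b ∈ Sᶜ := fun h => hbT (Or.inr ⟨h, hbu⟩)
  rcases ha with rfl | ⟨haS, haC⟩
  · exact hbT (Or.inl (huniq b ⟨hab, hbS, hbC hbS⟩))
  · exact haC ((ConnectedComponent.sound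
      (Adj.reachable (show (G.induce Sᶜ).Adj ⟨a, haS⟩ ⟨b, hbS⟩ from hab))).trans (hbC hbS))

theorem ncard_neighborSetInComponent_eq_two (hcubic : IsCubic G) (hS : S.encard ≤ 2)
    (hsep : Separates G S) {u : V} (hu : u ∈ S) (hconn : (G.induce (S \ {u})ᶜ).Preconnected)
    {C : (G.induce Sᶜ).ConnectedComponent} {v : V} (hv : v ∈ G.neighborSetInComponent C u)
    (hv' : ¬Separates G (insert v (S \ {u}))) :
    (G.neighborSetInComponent C u).ncard = 2 := by
  have hfin : (G.neighborSet u).Finite := Set.finite_of_ncard_pos (by rw [hcubic u]; norm_num)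
  have hCfin := hfin.subset (neighborSetInComponent_subset C u)
  obtain ⟨D, hDC⟩ := exists_ne_connectedComponent_of_separates hsep C
  have hDfin := hfin.subset (neighborSetInComponent_subset D u)
  have hsum : (G.neighborSetInComponent C u).ncard + (G.neighborSetInComponent D u).ncard ≤ 3 := by
    rw [← Set.ncard_union_eq (disjoint_neighborSetInComponent hDC.symm u) hCfin hDfin,
      ← hcubic u]
    exact Set.ncard_le_ncard (Set.union_subset (neighborSetInComponent_subset C u)
      (neighborSetInComponent_subset D u)) hfin
  have hD : 0 < (G.neighborSetInComponent D u).ncard :=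
    (Set.ncard_pos hDfin).2 (neighborSetInComponent_nonempty hu hconn D)
  refine le_antisymm (by omega) (not_lt.1 fun hlt => hv' ?_)
  have huniq : ∀ b ∈ G.neighborSetInComponent C u, b = v :=
    fun b hb => (Set.ncard_le_one hCfin).1 (by omega) b hb v hv
  obtain ⟨huv, hvS, hvC⟩ := hv
  obtain ⟨hSfin, hS⟩ := (Set.encard_le_coe_iff_finite_ncard_le (k := 2)).1 hS
  obtain ⟨c, hvc, hcS⟩ := Set.exists_mem_notMem_of_ncard_lt_ncard (t := G.neighborSet v)
    (by rw [hcubic v]; omega) hSfin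
  have hcC : (G.induce Sᶜ).connectedComponentMk ⟨c, hcS⟩ = C :=
    (ConnectedComponent.sound
      (Adj.reachable (show (G.induce Sᶜ).Adj ⟨v, hvS⟩ ⟨c, hcS⟩ from hvc))).symm.trans hvC
  exact separates_insert_sdiff_singleton hu huv huniq hcS hcC (G.ne_of_adj hvc).symm

lemma exists_adj_not_separates_of_isPath_minimal {x y : V} (P : G.Walk x y) (hP : P.IsPath)
    (hmin : ∀ (x' y' : V) (Q : G.Walk x' y'), Q.IsPath → Separates G ({x', y'} : Set V) →
      P.length ≤ Q.length)
    (hint : ∃ v ∈ P.support, v ≠ x ∧ v ≠ y) :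
    ∃ v ∈ P.support, G.Adj x v ∧ v ≠ y ∧ ¬Separates G {v, y} := by
  cases P with
  | nil =>
    obtain ⟨v, hv, hvx, -⟩ := hint
    exact absurd (List.mem_singleton.1 hv) hvx
  | cons hxv Q =>
    rw [Walk.cons_isPath_iff] at hP
    refine ⟨_, by simp, hxv, ?_, fun hsep => ?_⟩
    · rintro rfl
      obtain ⟨v, hv, hvx, hvy⟩ := hint
      rw [Walk.support_cons, Walk.nil_iff_support_eq.1 (Walk.isPath_iff_nil.1 hP.1)] at hv
      simp_all
    · simpa using hmin _ _ Q hP.1 hsep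

end SimpleGraph

theorem stmt2 {V : Type*} (G : SimpleGraph V) (h2 : TwoConnected G) (hcubic : IsCubic G)
    {x y : V} (P : G.Walk x y) (hP : P.IsPath) (hsep : Separates G ({x, y} : Set V))
    (hmin : ∀ (x' y' : V) (Q : G.Walk x' y'), Q.IsPath → Separates G ({x', y'} : Set V) →
      P.length ≤ Q.length)
    (C : (G.induce (({x, y} : Set V)ᶜ)).ConnectedComponent)
    -- the interior of `P` is nonempty and is contained in the component `C` of `G - {x,y}`
    (hint : ∃ v ∈ P.support, v ≠ x ∧ v ≠ y)
    (hC : ∀ v ∈ P.support, ∀ h : v ∈ (({x, y} : Set V)ᶜ),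
      (G.induce (({x, y} : Set V)ᶜ)).connectedComponentMk ⟨v, h⟩ = C) :
    {b : V | G.Adj x b ∧ ∃ h : b ∈ (({x, y} : Set V)ᶜ),
      (G.induce (({x, y} : Set V)ᶜ)).connectedComponentMk ⟨b, h⟩ = C}.ncard = 2 ∧
    {b : V | G.Adj y b ∧ ∃ h : b ∈ (({x, y} : Set V)ᶜ),
      (G.induce (({x, y} : Set V)ᶜ)).connectedComponentMk ⟨b, h⟩ = C}.ncard = 2 := by
  have hxy : x ≠ y := by
    rintro rfl
    obtain ⟨v, hv, hvx, -⟩ := hint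
    rw [Walk.nil_iff_support_eq.1 (Walk.isPath_iff_nil.1 hP)] at hv
    exact hvx (List.mem_singleton.1 hv)
  have hS : ({x, y} : Set V).encard ≤ 2 := (Set.encard_pair hxy).le
  obtain ⟨v, hvP, hxv, hvy, hv⟩ := exists_adj_not_separates_of_isPath_minimal P hP hmin hint
  obtain ⟨w, hwP, hyw, hwx, hw⟩ := exists_adj_not_separates_of_isPath_minimal P.reverse hP.reverse
    (fun x' y' Q hQ hs => P.length_reverse ▸ hmin x' y' Q hQ hs)
    (by simpa only [Walk.support_reverse, List.mem_reverse, and_comm] using hint)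
  rw [Walk.support_reverse, List.mem_reverse] at hwP
  have hvS : v ∈ ({x, y} : Set V)ᶜ := by simp [hxv.ne.symm, hvy]
  have hwS : w ∈ ({x, y} : Set V)ᶜ := by simp [hyw.ne.symm, hwx]
  constructor
  · refine ncard_neighborSetInComponent_eq_two hcubic hS hsep (Set.mem_insert x {y}) ?_
      ⟨hxv, hvS, hC v hvP hvS⟩ ?_ <;> rw [Set.pair_sdiff_left hxy]
    exacts [(h2.2.2 y).preconnected, hv]
  · refine ncard_neighborSetInComponent_eq_two hcubic hS hsep (Set.mem_insert_of_mem x rfl) ?_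
      ⟨hyw, hwS, hC w hwP hwS⟩ ?_ <;> rw [Set.pair_sdiff_right hxy]
    exacts [(h2.2.2 x).preconnected, hw]
end

section
/- Let G be a 2-connected cubic graph, and let P be a shortest path whose endvertices x, y separate G. Then there exist three pairwise internally disjoint x–y paths in G. -/
open SimpleGraph

/-- Two `x`–`y` paths are internally disjoint if they share no vertex besides `x` and `y`. -/
def InternallyDisjoint {V : Type*} {G : SimpleGraph V} {x y : V}
    (P Q : G.Walk x y) : Prop :=
  ∀ v : V, v ∈ P.support → v ∈ Q.support → v = x ∨ v = y

/-!
Every component of `G - {x, y}` is attached to both `x` and `y` (otherwise `G` would have a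
cutvertex), so each component carries an `x`–`y` path, and it suffices to find two internally
disjoint `x`–`y` paths inside `K ∪ {x, y}` for one component `K`. If `x` and `y` are adjacent, the
edge `xy` is one of them. Otherwise take for `K` the component containing the interior of `P`;
then `K ∪ {x, y}` is 2-connected: a vertex `w ∈ K` cutting `x` from `y` there lies on `P`, and
since `w` has a neighbour in `K` (cubicity) one of `{x, w}`, `{w, y}` separates `G` and is joined
by a proper subpath of `P`, contradicting minimality. Whitney's theorem, that two vertices of a
2-connected graph lie on a common cycle, then yields the two paths.
-/

theorem InternallyDisjoint.symm {V : Type*} {G : SimpleGraph V} {x y : V} {P Q : G.Walk x y}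
    (h : InternallyDisjoint P Q) : InternallyDisjoint Q P :=
  fun v hQ hP => h v hP hQ

namespace SimpleGraph

variable {V : Type*} {G : SimpleGraph V}

def ReachableIn (G : SimpleGraph V) (s : Set V) (u v : V) : Prop :=
  ∃ W : G.Walk u v, ∀ c ∈ W.support, c ∈ s

namespace ReachableIn

variable {s t : Set V} {a b c : V}

lemma refl (ha : a ∈ s) : G.ReachableIn s a a := ⟨.nil, by simpa⟩

lemma symm (h : G.ReachableIn s a b) : G.ReachableIn s b a := by
  obtain ⟨W, hW⟩ := h
  exact ⟨W.reverse, by simpa using hW⟩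

lemma trans (h₁ : G.ReachableIn s a b) (h₂ : G.ReachableIn s b c) : G.ReachableIn s a c := by
  obtain ⟨W₁, hW₁⟩ := h₁
  obtain ⟨W₂, hW₂⟩ := h₂
  refine ⟨W₁.append W₂, fun d hd => ?_⟩
  rw [Walk.mem_support_append_iff] at hd
  exact hd.elim (hW₁ d) (hW₂ d)

lemma mono (h : G.ReachableIn s a b) (hst : s ⊆ t) : G.ReachableIn t a b := by
  obtain ⟨W, hW⟩ := h
  exact ⟨W, fun d hd => hst (hW d hd)⟩

lemma mem_right (h : G.ReachableIn s a b) : b ∈ s := by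
  obtain ⟨W, hW⟩ := h
  exact hW b W.end_mem_support

lemma concat (h : G.ReachableIn s a b) (hbc : G.Adj b c) (hc : c ∈ s) : G.ReachableIn s a c :=
  h.trans ⟨hbc.toWalk, by simp [h.mem_right, hc]⟩

lemma exists_isPath (h : G.ReachableIn s a b) :
    ∃ W : G.Walk a b, W.IsPath ∧ ∀ c ∈ W.support, c ∈ s := by
  classical
  obtain ⟨W, hW⟩ := h
  exact ⟨W.bypass, W.bypass_isPath, fun c hc => hW c (W.support_bypass_subset_support hc)⟩

lemma exists_boundary (W : G.Walk a b) (ha : a ∈ s) (h : ¬ G.ReachableIn s a b) :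
    ∃ c d, G.ReachableIn s a c ∧ G.Adj c d ∧ d ∉ s ∧ d ∈ W.support := by
  obtain ⟨d, hd, hfst, hsnd⟩ := W.exists_boundary_dart {c | G.ReachableIn s a c} (refl ha) h
  exact ⟨d.fst, d.snd, hfst, d.adj, fun hs => hsnd (hfst.concat d.adj hs),
    W.dart_snd_mem_support_of_mem_darts hd⟩

end ReachableIn

lemma reachableIn_iff_reachable_induce {s : Set V} {a b : V} (ha : a ∈ s) (hb : b ∈ s) :
    G.ReachableIn s a b ↔ (G.induce s).Reachable ⟨a, ha⟩ ⟨b, hb⟩ := by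
  refine ⟨fun ⟨W, hW⟩ => ⟨W.induce s hW⟩, fun ⟨W⟩ => ?_⟩
  refine ⟨W.map (Embedding.induce s).toHom, fun c hc => ?_⟩
  erw [Walk.support_map] at hc
  obtain ⟨c', -, rfl⟩ := List.mem_map.1 hc
  exact c'.2

lemma Walk.IsPath.append {u m v : V} {p : G.Walk u m} {q : G.Walk m v} (hp : p.IsPath)
    (hq : q.IsPath) (h : ∀ c ∈ p.support, c ∈ q.support → c = m) : (p.append q).IsPath := by
  rw [Walk.isPath_def, Walk.support_append]
  refine hp.support_nodup.append hq.support_nodup.tail fun c hcp hcq => ?_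
  rw [h c hcp (List.mem_of_mem_tail hcq)] at hcq
  exact (List.nodup_cons.1 (q.cons_tail_support ▸ hq.support_nodup)).1 hcq

lemma Walk.exists_last_mem {C : Set V} :
    ∀ {a b : V} (W : G.Walk a b), (∃ c ∈ W.support, c ∈ C) →
      ∃ z ∈ C, ∃ W' : G.Walk z b, (∀ c ∈ W'.support, c ∈ W.support) ∧
        ∀ c ∈ W'.support, c ∈ C → c = z
  | _, _, .nil, ⟨c, hc, hcC⟩ => by
    rw [Walk.support_nil, List.mem_singleton] at hc
    exact ⟨_, hc ▸ hcC, .nil, fun _ => id, fun d hd _ => by simpa using hd⟩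
  | a, _, .cons h W, hC => by
    by_cases hW : ∃ c ∈ W.support, c ∈ C
    · obtain ⟨z, hz, W', hW'W, hW'C⟩ := W.exists_last_mem hW
      exact ⟨z, hz, W', fun c hc => by simp [hW'W c hc], hW'C⟩
    · simp only [not_exists, not_and] at hW
      obtain ⟨c, hc, hcC⟩ := hC
      have hca : c = a := by
        rcases List.mem_cons.1 (Walk.support_cons h W ▸ hc) with hca | hcW
        exacts [hca, absurd hcC (hW c hcW)]
      refine ⟨a, hca ▸ hcC, .cons h W, fun _ => id, fun d hd hdC => ?_⟩
      rcases List.mem_cons.1 (Walk.support_cons h W ▸ hd) with hda | hdW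
      exacts [hda, absurd hdC (hW d hdW)]

def CycleThrough (G : SimpleGraph V) (s : Set V) (u v : V) : Prop :=
  ∃ P Q : G.Walk u v, P.IsPath ∧ Q.IsPath ∧ P ≠ Q ∧ InternallyDisjoint P Q ∧
    (∀ c ∈ P.support, c ∈ s) ∧ ∀ c ∈ Q.support, c ∈ s

/-- The cycle `A ∪ B` through `u` and `w` is rerouted: `A` up to `z` followed by `R`, against `B`
followed by the edge `wv`. -/
lemma cycleThrough_splice {s : Set V} {u w v z : V} {A B : G.Walk u w} (hA : A.IsPath)
    (hB : B.IsPath) (hAB : InternallyDisjoint A B) (hAs : ∀ c ∈ A.support, c ∈ s)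
    (hBs : ∀ c ∈ B.support, c ∈ s) (hzA : z ∈ A.support) (hzw : z ≠ w) (hwv : G.Adj w v)
    (hvu : v ≠ u) {R : G.Walk z v} (hR : R.IsPath) (hRs : ∀ c ∈ R.support, c ∈ s)
    (hwR : w ∉ R.support) (hRA : ∀ c ∈ R.support, c ∈ A.support → c = z)
    (hRB : ∀ c ∈ R.support, c ∈ B.support → c = z) : CycleThrough G s u v := by
  classical
  have hA'A : ∀ c ∈ (A.takeUntil z hzA).support, c ∈ A.support :=
    fun c hc => A.support_takeUntil_subset_support hzA hc
  have hwA' : w ∉ (A.takeUntil z hzA).support := fun hw =>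
    ((A.take_spec hzA ▸ hA).ne_of_mem_support_of_append hzw.symm hw
      (A.dropUntil z hzA).end_mem_support) rfl
  have hvB : v ∉ B.support := by
    intro hv
    have hvz : v = z := hRB v R.end_mem_support hv
    subst hvz
    exact (hAB v hzA hv).elim hvu hzw
  refine ⟨(A.takeUntil z hzA).append R, B.concat hwv,
    (hA.takeUntil hzA).append hR fun c hc hcR => hRA c hcR (hA'A c hc), hB.concat hvB hwv,
    fun hPQ => ?_, fun c hcP hcQ => ?_, fun c hc => ?_, fun c hc => ?_⟩
  · have hw : w ∈ ((A.takeUntil z hzA).append R).support := hPQ ▸ by simp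
    rw [Walk.mem_support_append_iff] at hw
    exact hw.elim hwA' hwR
  · rw [Walk.support_concat, List.mem_append, List.mem_singleton] at hcQ
    rcases hcQ with hcB | rfl
    · rcases (Walk.mem_support_append_iff _ _).1 hcP with hcA | hcR
      · exact Or.inl ((hAB c (hA'A c hcA) hcB).resolve_right fun hcw => hwA' (hcw ▸ hcA))
      · obtain rfl := hRB c hcR hcB
        exact Or.inl ((hAB c hzA hcB).resolve_right hzw)
    · exact Or.inr rfl
  · rcases (Walk.mem_support_append_iff _ _).1 hc with hcA | hcR
    exacts [hAs c (hA'A c hcA), hRs c hcR]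
  · rw [Walk.support_concat, List.mem_append, List.mem_singleton] at hc
    rcases hc with hcB | rfl
    exacts [hBs c hcB, hRs _ R.end_mem_support]

lemma CycleThrough.extend {s : Set V} {u w v : V} (h : CycleThrough G s u w) (hwv : G.Adj w v)
    (hvu : v ≠ u) (hR : G.ReachableIn (s \ {w}) u v) : CycleThrough G s u v := by
  classical
  obtain ⟨A, B, hA, hB, -, hAB, hAs, hBs⟩ := h
  obtain ⟨R, hRs⟩ := hR
  obtain ⟨z, hz, R', hR'R, hR'AB⟩ :=
    R.exists_last_mem (C := {c | c ∈ A.support ∨ c ∈ B.support})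
      ⟨u, R.start_mem_support, Or.inl A.start_mem_support⟩
  have hR's : ∀ c ∈ R'.bypass.support, c ∈ s \ {w} :=
    fun c hc => hRs c (hR'R c (R'.support_bypass_subset_support hc))
  have hzw : z ≠ w := (hR's z R'.bypass.start_mem_support).2
  have hRA : ∀ c ∈ R'.bypass.support, c ∈ A.support → c = z :=
    fun c hc hcA => hR'AB c (R'.support_bypass_subset_support hc) (Or.inl hcA)
  have hRB : ∀ c ∈ R'.bypass.support, c ∈ B.support → c = z :=
    fun c hc hcB => hR'AB c (R'.support_bypass_subset_support hc) (Or.inr hcB)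
  rcases hz with hzA | hzB
  · exact cycleThrough_splice hA hB hAB hAs hBs hzA hzw hwv hvu R'.bypass_isPath
      (fun c hc => (hR's c hc).1) (fun hw => (hR's w hw).2 rfl) hRA hRB
  · exact cycleThrough_splice hB hA hAB.symm hBs hAs hzB hzw hwv hvu R'.bypass_isPath
      (fun c hc => (hR's c hc).1) (fun hw => (hR's w hw).2 rfl) hRB hRA

/-- `G[s]` is 2-connected, phrased through walks of `G` that stay inside `s`. -/
def IsTwoConnectedIn (G : SimpleGraph V) (s : Set V) : Prop :=
  (∃ a ∈ s, ∃ b ∈ s, ∃ c ∈ s, a ≠ b ∧ a ≠ c ∧ b ≠ c) ∧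
    ∀ w, ∀ a ∈ s, ∀ b ∈ s, a ≠ w → b ≠ w → G.ReachableIn (s \ {w}) a b

lemma IsTwoConnectedIn.exists_ne {s : Set V} (hs : IsTwoConnectedIn G s) (u v : V) :
    ∃ t ∈ s, t ≠ u ∧ t ≠ v := by
  obtain ⟨⟨a, ha, b, hb, c, hc, hab, hac, hbc⟩, -⟩ := hs
  by_contra! H
  have key : ∀ t ∈ s, t = u ∨ t = v := fun t ht => (em (t = u)).imp_right (H t ht)
  rcases key a ha with rfl | rfl <;> rcases key b hb with rfl | rfl <;>
    rcases key c hc with rfl | rfl <;> contradiction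

lemma IsTwoConnectedIn.cycleThrough_of_adj {s : Set V} (hs : IsTwoConnectedIn G s) {u v : V}
    (hu : u ∈ s) (hv : v ∈ s) (h : G.Adj u v) : CycleThrough G s u v := by
  obtain ⟨t, ht, htu, htv⟩ := hs.exists_ne u v
  obtain ⟨W, hW⟩ := hs.2 v u hu t ht h.ne htv
  cases W with
  | nil => exact absurd rfl htu
  | @cons _ u' _ hu' W =>
  have hu's : u' ∈ s \ {v} := hW u' (by simp)
  obtain ⟨R, hR, hRs⟩ := (hs.2 u u' hu's.1 v hv hu'.ne.symm h.ne.symm).exists_isPath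
  have huR : u ∉ R.support := fun hu => (hRs u hu).2 rfl
  refine ⟨h.toWalk, .cons hu' R, h.isPath_toWalk, hR.cons huR, fun hPQ => ?_, fun c hc _ => ?_,
    ?_, ?_⟩
  · have : u' ∈ h.toWalk.support := hPQ ▸ (by simp)
    exact hu's.2 (by simpa [hu'.ne.symm] using this)
  · simpa using hc
  · simp [hu, hv]
  · simpa [hu] using fun c hc => (hRs c hc).1

/-- Whitney's induction: the cycle through `u` and the next vertex `v'` of the walk extends to `v`,
because some walk from `u` to `v` inside `s` avoids `v'`. -/
lemma IsTwoConnectedIn.cycleThrough_of_walk {s : Set V} (hs : IsTwoConnectedIn G s) {u : V}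
    (hu : u ∈ s) : ∀ {v} (W : G.Walk v u), (∀ c ∈ W.support, c ∈ s) → v ≠ u →
      CycleThrough G s u v
  | _, .nil, _, hvu => absurd rfl hvu
  | v, .cons (v := v') h W, hW, hvu => by
    have hvs : v ∈ s := hW v (by simp)
    by_cases hv'u : v' = u
    · subst hv'u
      exact hs.cycleThrough_of_adj hu hvs h.symm
    · exact (hs.cycleThrough_of_walk hu W (fun c hc => hW c (by simp [hc])) hv'u).extend h.symm
        hvu (hs.2 v' u hu v hvs (Ne.symm hv'u) h.ne)

theorem IsTwoConnectedIn.cycleThrough {s : Set V} (hs : IsTwoConnectedIn G s) {u v : V}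
    (hu : u ∈ s) (hv : v ∈ s) (huv : u ≠ v) : CycleThrough G s u v := by
  obtain ⟨t, ht, htu, htv⟩ := hs.exists_ne u v
  obtain ⟨W, hW⟩ := hs.2 t v hv u hu htv.symm htu.symm
  exact hs.cycleThrough_of_walk hu W (fun c hc => (hW c hc).1) huv.symm

def componentIn (G : SimpleGraph V) (s : Set V) (k : V) : Set V :=
  {c | G.ReachableIn s k c}

section componentIn

variable {s : Set V} {k a b c d w : V}

lemma componentIn_subset : G.componentIn s k ⊆ s := fun _ h => h.mem_right

lemma mem_componentIn_self (hk : k ∈ s) : k ∈ G.componentIn s k := ReachableIn.refl hk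

lemma mem_componentIn_of_adj (hc : c ∈ G.componentIn s k) (h : G.Adj c d) (hd : d ∈ s) :
    d ∈ G.componentIn s k :=
  ReachableIn.concat hc h hd

lemma notMem_componentIn_of_mem (hl : a ∉ G.componentIn s k) (hc : c ∈ G.componentIn s k) :
    c ∉ G.componentIn s a :=
  fun hc' => hl (ReachableIn.trans hc hc'.symm)

lemma exists_reachableIn_exit (ha : a ∈ G.componentIn s k) (W : G.Walk a b)
    (hb : b ∉ G.componentIn s k) (hw : w ∉ W.support) :
    ∃ d ∈ W.support, d ∉ s ∧ G.ReachableIn (insert d (G.componentIn s k \ {w})) a d := by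
  have haw : a ≠ w := fun h => hw (h ▸ W.start_mem_support)
  obtain ⟨c, d, hac, hcd, hdU, hdW⟩ :=
    ReachableIn.exists_boundary W (s := G.componentIn s k \ {w}) ⟨ha, haw⟩
      fun h => hb h.mem_right.1
  have hdw : d ≠ w := fun h => hw (h ▸ hdW)
  exact ⟨d, hdW, fun hds => hdU ⟨mem_componentIn_of_adj hac.mem_right.1 hcd hds, hdw⟩,
    (hac.mono (Set.subset_insert _ _)).concat hcd (Set.mem_insert _ _)⟩

end componentIn

lemma Walk.IsPath.reachableIn_of_mem {s : Set V} :
    ∀ {a b : V} {W : G.Walk a b}, W.IsPath → a ∈ s → (∀ c ∈ W.support, c ∉ s → c = b) →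
      ∀ c ∈ W.support, c ∈ s → G.ReachableIn s a c
  | _, _, .nil, _, ha, _, c, hc, _ => by
    rw [Walk.support_nil, List.mem_singleton] at hc
    subst hc
    exact ReachableIn.refl ha
  | a, _, .cons (v := a') h W, hW, ha, hout, c, hc, hcs => by
    rcases List.mem_cons.1 (Walk.support_cons h W ▸ hc) with hca | hcW
    · subst hca
      exact ReachableIn.refl ha
    by_cases ha' : a' ∈ s
    · exact ((ReachableIn.refl ha).concat h ha').trans
        (hW.of_cons.reachableIn_of_mem ha' (fun d hd => hout d (by simp [hd])) c hcW hcs)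
    · obtain rfl := hout a' (by simp) ha'
      rw [Walk.nil_iff_support_eq.1 (Walk.isPath_iff_nil.1 hW.of_cons), List.mem_singleton]
        at hcW
      exact absurd (hcW ▸ hcs) ha'

lemma Walk.IsPath.exists_support_subset_componentIn {x y : V} {P : G.Walk x y} (hP : P.IsPath)
    (hxy : x ≠ y) (hadj : ¬ G.Adj x y) :
    ∃ k ∈ ({x, y} : Set V)ᶜ, ∀ c ∈ P.support, c ∈ G.componentIn {x, y}ᶜ k ∪ {x, y} := by
  cases P with
  | nil => exact absurd rfl hxy
  | @cons _ p _ h P =>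
  have hpy : p ≠ y := fun hpy => hadj (hpy ▸ h)
  have hp : p ∈ ({x, y} : Set V)ᶜ := by simp [h.ne.symm, hpy]
  have hxP : x ∉ P.support := ((Walk.cons_isPath_iff h P).1 hP).2
  refine ⟨p, hp, fun c hc => ?_⟩
  rcases List.mem_cons.1 (Walk.support_cons h P ▸ hc) with rfl | hcP
  · simp
  by_cases hcT : c ∈ ({x, y} : Set V)
  · exact Or.inr hcT
  refine Or.inl (hP.of_cons.reachableIn_of_mem hp (fun d hd hdT => ?_) c hcP hcT)
  simp only [Set.mem_compl_iff, not_not, Set.mem_insert_iff, Set.mem_singleton_iff] at hdT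
  exact hdT.resolve_left fun hdx => hxP (hdx ▸ hd)

end SimpleGraph

section

variable {V : Type*} {G : SimpleGraph V}

lemma separates_iff {S : Set V} :
    Separates G S ↔ ∃ a b, a ∉ S ∧ b ∉ S ∧ ¬ G.ReachableIn Sᶜ a b := by
  simp only [Separates, Preconnected, Subtype.forall, not_forall, Set.mem_compl_iff]
  refine exists_congr fun a => ⟨fun ⟨ha, b, hb, h⟩ => ⟨b, ha, hb, ?_⟩,
    fun ⟨b, ha, hb, h⟩ => ⟨ha, b, hb, ?_⟩⟩
  · rwa [reachableIn_iff_reachable_induce ha hb]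
  · rwa [← reachableIn_iff_reachable_induce ha hb]

lemma TwoConnected.reachableIn (hG : TwoConnected G) {a b w : V} (ha : a ≠ w) (hb : b ≠ w) :
    G.ReachableIn {w}ᶜ a b :=
  (reachableIn_iff_reachable_induce ha hb).2 ((hG.2.2 w).preconnected _ _)

lemma TwoConnected.exists_reachableIn_of_mem_componentIn (hG : TwoConnected G) {T : Set V}
    {k a w t : V} (ha : a ∈ G.componentIn Tᶜ k) (haw : a ≠ w) (ht : t ∈ T) (htw : t ≠ w) :
    ∃ d ∈ T, d ≠ w ∧ G.ReachableIn ((G.componentIn Tᶜ k ∪ T) \ {w}) a d := by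
  obtain ⟨W, hW⟩ := hG.reachableIn haw htw
  obtain ⟨d, hdW, hdT, hd⟩ := exists_reachableIn_exit ha W (fun h => componentIn_subset h ht)
    (fun h => hW w h rfl)
  rw [Set.notMem_compl_iff] at hdT
  have hdw : d ≠ w := hW d hdW
  exact ⟨d, hdT, hdw, hd.mono (Set.insert_subset ⟨Or.inr hdT, hdw⟩
    (Set.sdiff_subset_sdiff_left Set.subset_union_left))⟩

lemma TwoConnected.exists_path_through_componentIn (hG : TwoConnected G) {x y k : V}
    (hxy : x ≠ y) (hk : k ∈ ({x, y} : Set V)ᶜ) :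
    ∃ R : G.Walk x y, R.IsPath ∧ (∀ c ∈ R.support, c ∈ G.componentIn {x, y}ᶜ k ∪ {x, y}) ∧
      ∃ c ∈ R.support, c ∈ G.componentIn {x, y}ᶜ k := by
  have hkK := mem_componentIn_self (G := G) hk
  simp only [Set.mem_compl_iff, Set.mem_insert_iff, Set.mem_singleton_iff, not_or] at hk
  obtain ⟨d, hd, hdy, hkd⟩ :=
    hG.exists_reachableIn_of_mem_componentIn hkK hk.2 (t := x) (by simp) hxy
  obtain rfl : d = x := by simpa [hdy] using hd
  obtain ⟨W, hW⟩ := hkd.symm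
  cases W with
  | nil => exact absurd rfl hk.1
  | @cons _ c _ hxc W =>
  have hc : c ∈ G.componentIn {d, y}ᶜ k := by
    obtain ⟨hcs, hcy⟩ := hW c (by simp)
    simpa [hxc.ne.symm, show c ≠ y from hcy] using hcs
  obtain ⟨d', hd', hd'x, hcd'⟩ := hG.exists_reachableIn_of_mem_componentIn hc hxc.ne.symm
    (t := y) (by simp) hxy.symm
  obtain rfl : d' = y := by simpa [hd'x] using hd'
  obtain ⟨R, hR, hRs⟩ := hcd'.exists_isPath
  refine ⟨.cons hxc R, hR.cons fun h => (hRs d h).2 rfl, fun e he => ?_, c, by simp, hc⟩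
  rcases List.mem_cons.1 (by simpa using he) with rfl | he
  exacts [by simp, (hRs e he).1]

lemma TwoConnected.cycleThrough_componentIn_of_adj (hG : TwoConnected G) {x y k : V}
    (hxy : G.Adj x y) (hk : k ∈ ({x, y} : Set V)ᶜ) :
    CycleThrough G (G.componentIn {x, y}ᶜ k ∪ {x, y}) x y := by
  obtain ⟨R, hR, hRs, c, hcR, hcK⟩ := hG.exists_path_through_componentIn hxy.ne hk
  refine ⟨hxy.toWalk, R, hxy.isPath_toWalk, hR, fun h => ?_, fun v hv _ => by simpa using hv,
    by simp, hRs⟩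
  have hcT : c ∉ ({x, y} : Set V) := componentIn_subset hcK
  rw [← h] at hcR
  exact hcT (by simpa using hcR)

lemma separates_of_not_reachableIn {x y k u w : V} (hxy : x ≠ y)
    (hu : u ∈ G.componentIn {x, y}ᶜ k) (huw : u ≠ w) (hwy : w ≠ y)
    (h : ¬ G.ReachableIn ((G.componentIn {x, y}ᶜ k ∪ {x, y}) \ {w}) u y) :
    Separates G {x, w} := by
  have hux : u ≠ x := fun hux => componentIn_subset hu (by simp [hux])
  refine separates_iff.2 ⟨u, y, by simp [hux, huw], by simp [hxy.symm, hwy.symm],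
    fun ⟨W, hW⟩ => h ?_⟩
  obtain ⟨d, hdW, hdT, hd⟩ := exists_reachableIn_exit hu W
    (fun hy => componentIn_subset hy (by simp)) (fun hw => hW w hw (by simp))
  have hdx : d ≠ x := fun hdx => hW d hdW (by simp [hdx])
  obtain rfl : d = y := by simpa [hdx] using hdT
  exact hd.mono (Set.insert_subset ⟨by simp, hwy.symm⟩
    (Set.sdiff_subset_sdiff_left Set.subset_union_left))

lemma IsCubic.exists_adj_ne (h : IsCubic G) (w x y : V) : ∃ u, G.Adj w u ∧ u ≠ x ∧ u ≠ y := by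
  by_contra! H
  have hsub : G.neighborSet w ⊆ {x, y} := fun u hu => by
    by_cases hux : u = x
    · simp [hux]
    · simp [H u hu hux]
  have h3 := Set.ncard_le_ncard hsub (Set.toFinite _)
  have h2 := Set.ncard_insert_le x {y}
  rw [h w, Set.ncard_singleton] at *
  omega

lemma reachableIn_of_minimal (hcubic : IsCubic G) {x y k w : V} (hxy : x ≠ y) {P : G.Walk x y}
    (hP : P.IsPath) (hPK : ∀ c ∈ P.support, c ∈ G.componentIn {x, y}ᶜ k ∪ {x, y})
    (hmin : ∀ (x' y' : V) (Q : G.Walk x' y'), Q.IsPath → Separates G ({x', y'} : Set V) →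
      P.length ≤ Q.length)
    (hw : w ∉ ({x, y} : Set V)) :
    G.ReachableIn ((G.componentIn {x, y}ᶜ k ∪ {x, y}) \ {w}) x y := by
  classical
  by_contra h
  by_cases hwP : w ∈ P.support
  swap
  · exact h ⟨P, fun c hc => ⟨hPK c hc, fun hcw => hwP (Set.mem_singleton_iff.1 hcw ▸ hc)⟩⟩
  have hwK := (hPK w hwP).resolve_right hw
  simp only [Set.mem_insert_iff, Set.mem_singleton_iff, not_or] at hw
  obtain ⟨u, hwu, hux, huy⟩ := hcubic.exists_adj_ne w x y
  have huK := mem_componentIn_of_adj hwK hwu (by simp [hux, huy])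
  by_cases hy : G.ReachableIn ((G.componentIn {x, y}ᶜ k ∪ {x, y}) \ {w}) u y
  · have hsep : Separates G {y, w} := by
      refine separates_of_not_reachableIn (k := k) hxy.symm (by rwa [Set.pair_comm])
        hwu.ne.symm hw.1 ?_
      rw [Set.pair_comm]
      exact fun hx => h (hx.symm.trans hy)
    have := hmin w y (P.dropUntil w hwP) (hP.dropUntil hwP) (by rwa [Set.pair_comm])
    exact absurd this (not_le.2 (P.length_dropUntil_lt_length hwP hw.1))
  · have := hmin x w (P.takeUntil w hwP) (hP.takeUntil hwP)
      (separates_of_not_reachableIn hxy huK hwu.ne.symm hw.2 hy)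
    exact absurd this (not_le.2 (P.length_takeUntil_lt_length hwP hw.2))

lemma isTwoConnectedIn_of_minimal (hG : TwoConnected G) (hcubic : IsCubic G) {x y k : V}
    (hxy : x ≠ y) (hk : k ∈ ({x, y} : Set V)ᶜ) {P : G.Walk x y} (hP : P.IsPath)
    (hPK : ∀ c ∈ P.support, c ∈ G.componentIn {x, y}ᶜ k ∪ {x, y})
    (hmin : ∀ (x' y' : V) (Q : G.Walk x' y'), Q.IsPath → Separates G ({x', y'} : Set V) →
      P.length ≤ Q.length) :
    IsTwoConnectedIn G (G.componentIn {x, y}ᶜ k ∪ {x, y}) := by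
  set s := G.componentIn {x, y}ᶜ k ∪ {x, y}
  have hkK := mem_componentIn_self (G := G) hk
  simp only [Set.mem_compl_iff, Set.mem_insert_iff, Set.mem_singleton_iff, not_or] at hk
  refine ⟨⟨x, by simp [s], y, by simp [s], k, Or.inl hkK, hxy, Ne.symm hk.1, Ne.symm hk.2⟩,
    fun w a ha b hb haw hbw => ?_⟩
  have hT : ∀ t ∈ ({x, y} : Set V), ∀ t' ∈ ({x, y} : Set V), t ≠ w → t' ≠ w →
      G.ReachableIn (s \ {w}) t t' := by
    intro t ht t' ht' htw ht'w
    have hts : t ∈ s \ {w} := ⟨Or.inr ht, htw⟩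
    simp only [Set.mem_insert_iff, Set.mem_singleton_iff] at ht ht'
    rcases ht with rfl | rfl <;> rcases ht' with rfl | rfl
    · exact ReachableIn.refl hts
    · exact reachableIn_of_minimal hcubic hxy hP hPK hmin (by simp [htw.symm, ht'w.symm])
    · exact (reachableIn_of_minimal hcubic hxy hP hPK hmin (by simp [htw.symm, ht'w.symm])).symm
    · exact ReachableIn.refl hts
  have hexit : ∀ a ∈ s, a ≠ w →
      ∃ t ∈ ({x, y} : Set V), t ≠ w ∧ G.ReachableIn (s \ {w}) a t := by
    intro a ha haw
    rcases ha with haK | haT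
    · obtain ⟨t, ht, htw⟩ : ∃ t ∈ ({x, y} : Set V), t ≠ w := by
        by_cases hxw : x = w
        · exact ⟨y, by simp, fun hyw => hxy (hxw.trans hyw.symm)⟩
        · exact ⟨x, by simp, hxw⟩
      exact hG.exists_reachableIn_of_mem_componentIn haK haw ht htw
    · exact ⟨a, haT, haw, ReachableIn.refl ⟨Or.inr haT, haw⟩⟩
  obtain ⟨t, ht, htw, hat⟩ := hexit a ha haw
  obtain ⟨t', ht', ht'w, hbt'⟩ := hexit b hb hbw
  exact hat.trans ((hT t ht t' ht' htw ht'w).trans hbt'.symm)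

lemma TwoConnected.exists_three_paths_of_cycleThrough (hG : TwoConnected G) {x y k l : V}
    (hxy : x ≠ y) (hl : l ∈ ({x, y} : Set V)ᶜ) (hlk : l ∉ G.componentIn {x, y}ᶜ k)
    (h : CycleThrough G (G.componentIn {x, y}ᶜ k ∪ {x, y}) x y) :
    ∃ P₁ P₂ P₃ : G.Walk x y, P₁.IsPath ∧ P₂.IsPath ∧ P₃.IsPath ∧
      P₁ ≠ P₂ ∧ P₁ ≠ P₃ ∧ P₂ ≠ P₃ ∧
      InternallyDisjoint P₁ P₂ ∧ InternallyDisjoint P₁ P₃ ∧ InternallyDisjoint P₂ P₃ := by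
  obtain ⟨P₁, P₂, hP₁, hP₂, h₁₂, hd₁₂, hP₁s, hP₂s⟩ := h
  obtain ⟨P₃, hP₃, hP₃s, c, hcP₃, hcL⟩ := hG.exists_path_through_componentIn hxy hl
  have hcross : ∀ Q : G.Walk x y, (∀ v ∈ Q.support, v ∈ G.componentIn {x, y}ᶜ k ∪ {x, y}) →
      (∀ v ∈ Q.support, v ∈ P₃.support → v ∈ ({x, y} : Set V)) := fun Q hQ v hvQ hvP₃ =>
    (hP₃s v hvP₃).resolve_left fun hvL =>
      notMem_componentIn_of_mem hlk ((hQ v hvQ).resolve_right (componentIn_subset hvL)) hvL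
  have hne : ∀ Q : G.Walk x y, (∀ v ∈ Q.support, v ∈ G.componentIn {x, y}ᶜ k ∪ {x, y}) →
      Q ≠ P₃ := fun Q hQ hQP₃ =>
    componentIn_subset hcL (hcross Q hQ c (hQP₃ ▸ hcP₃) hcP₃)
  exact ⟨P₁, P₂, P₃, hP₁, hP₂, hP₃, h₁₂, hne P₁ hP₁s, hne P₂ hP₂s, hd₁₂,
    fun v h₁ h₃ => by simpa using hcross P₁ hP₁s v h₁ h₃,
    fun v h₂ h₃ => by simpa using hcross P₂ hP₂s v h₂ h₃⟩

end

theorem stmt3 {V : Type*} (G : SimpleGraph V) (h2 : TwoConnected G) (hcubic : IsCubic G)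
    {x y : V} (P : G.Walk x y) (hP : P.IsPath) (hsep : Separates G ({x, y} : Set V))
    (hmin : ∀ (x' y' : V) (Q : G.Walk x' y'), Q.IsPath → Separates G ({x', y'} : Set V) →
      P.length ≤ Q.length) :
    ∃ P₁ P₂ P₃ : G.Walk x y, P₁.IsPath ∧ P₂.IsPath ∧ P₃.IsPath ∧
      P₁ ≠ P₂ ∧ P₁ ≠ P₃ ∧ P₂ ≠ P₃ ∧
      InternallyDisjoint P₁ P₂ ∧ InternallyDisjoint P₁ P₃ ∧ InternallyDisjoint P₂ P₃ := by
  have hxy : x ≠ y := by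
    rintro rfl
    rw [Separates, Set.pair_eq_singleton] at hsep
    exact hsep (h2.2.2 x).preconnected
  obtain ⟨k, l, hk, hl, hkl⟩ := separates_iff.1 hsep
  obtain ⟨k, hk, hcycle, l, hl, hlk⟩ : ∃ k ∈ ({x, y} : Set V)ᶜ,
      CycleThrough G (G.componentIn {x, y}ᶜ k ∪ {x, y}) x y ∧
      ∃ l ∈ ({x, y} : Set V)ᶜ, l ∉ G.componentIn {x, y}ᶜ k := by
    by_cases hadj : G.Adj x y
    · exact ⟨k, hk, h2.cycleThrough_componentIn_of_adj hadj hk, l, hl, hkl⟩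
    obtain ⟨p, hp, hPp⟩ := hP.exists_support_subset_componentIn hxy hadj
    refine ⟨p, hp, (isTwoConnectedIn_of_minimal h2 hcubic hxy hp hP hPp hmin).cycleThrough
      (by simp) (by simp) hxy, ?_⟩
    by_contra! H
    exact hkl ((H k hk).symm.trans (H l hl))
  exact h2.exists_three_paths_of_cycleThrough hxy hl hlk hcycle
end

section
/- Let G be the Cayley graph of a group Γ with respect to a symmetric generating set S. Then the set of edge sets (circuits) of closed walks induced by the relators of any presentation ⟨S | R⟩ of Γ generates the cycle space of G over Z/2Z. -/
open SimpleGraph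

/-- The Cayley graph of `Γ` with respect to a (symmetric) set `S ⊆ Γ`. -/
def cayley (Γ : Type*) [Group Γ] (S : Set Γ) : SimpleGraph Γ :=
  SimpleGraph.fromRel (fun x y => x⁻¹ * y ∈ S)

/-- The circuit of a closed walk: the `ZMod 2`-valued indicator of edges traversed
an odd number of times. -/
noncomputable def walkCircuit {V : Type*} {G : SimpleGraph V} {u : V} (w : G.Walk u u) :
    Sym2 V → ZMod 2 :=
  fun e => letI := Classical.decEq V; ((w.edges.count e : ℕ) : ZMod 2)

/-- The (finitary) cycle space of `G` over `ZMod 2`, spanned by the circuits of cycles. -/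
noncomputable def cycleSpace {V : Type*} (G : SimpleGraph V) :
    Submodule (ZMod 2) (Sym2 V → ZMod 2) :=
  Submodule.span (ZMod 2) {f | ∃ (v : V) (w : G.Walk v v), w.IsCycle ∧ f = walkCircuit w}

/-- The list of group elements (generators or their inverses) given by the letters of a
word in the free group over `S`. -/
noncomputable def wordSteps {Γ : Type*} [Group Γ] {S : Set Γ} (w : FreeGroup ↥S) : List Γ :=
  letI := Classical.decEq ↥S
  w.toWord.map (fun p => if p.2 then (p.1 : Γ) else (p.1 : Γ)⁻¹)

/-- The edges of the walk starting at `g` and following the steps in `l`. -/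
def edgeList {Γ : Type*} [Group Γ] (g : Γ) : List Γ → List (Sym2 Γ)
  | [] => []
  | s :: rest => s(g, g * s) :: edgeList (g * s) rest

/-- The circuit (mod-2 edge indicator) of the walk starting at `g` following the steps `l`. -/
noncomputable def circuitOf {Γ : Type*} [Group Γ] (g : Γ) (l : List Γ) : Sym2 Γ → ZMod 2 :=
  fun e => letI := Classical.decEq Γ; (((edgeList g l).count e : ℕ) : ZMod 2)

/-!
A closed walk in `Cay(Γ, S)` spells a word in the free group on `S` that evaluates to `1`, hence
lies in the normal closure of `R`. The mod-2 circuit of the walk spelled by a word from a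
basepoint `g` is a cocycle: it ignores free reductions, it is additive under products (the second
factor is read from the basepoint shifted by the value of the first), and it changes sign under
inversion. So conjugating a relator only moves its basepoint, and the circuit of every word in
the normal closure of `R` is a sum of relator circuits.
-/

attribute [local instance] Classical.decEq

section Circuits

variable {Γ : Type*} [Group Γ]

lemma edgeList_append (g : Γ) (l₁ l₂ : List Γ) :
    edgeList g (l₁ ++ l₂) = edgeList g l₁ ++ edgeList (g * l₁.prod) l₂ := by
  induction l₁ generalizing g with
  | nil => simp [edgeList]
  | cons s t ih => simp [edgeList, ih, mul_assoc]

@[simp]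
lemma circuitOf_nil (g : Γ) : circuitOf g ([] : List Γ) = 0 := by
  funext e
  simp [circuitOf, edgeList]

lemma circuitOf_append (g : Γ) (l₁ l₂ : List Γ) :
    circuitOf g (l₁ ++ l₂) = circuitOf g l₁ + circuitOf (g * l₁.prod) l₂ := by
  funext e
  simp [circuitOf, edgeList_append, List.count_append]

/-- A backtrack `s, s⁻¹` crosses the same edge twice, which is invisible mod 2. -/
lemma circuitOf_cons_inv_cons (g s : Γ) (l : List Γ) :
    circuitOf g (s :: s⁻¹ :: l) = circuitOf g l := by
  funext e
  simp only [circuitOf, edgeList, mul_inv_cancel_right, List.count_cons]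
  push_cast
  rw [show s(g * s, g) = s(g, g * s) from Sym2.eq_swap, CharTwo.add_cancel_right]

end Circuits

section Words

variable {Γ : Type*} [Group Γ] {S : Set Γ}

def letterValue (p : ↥S × Bool) : Γ :=
  if p.2 then (p.1 : Γ) else (p.1 : Γ)⁻¹

lemma wordSteps_eq_map_letterValue (w : FreeGroup ↥S) :
    wordSteps w = w.toWord.map letterValue := by
  unfold wordSteps letterValue
  congr
  exact Subsingleton.elim _ _

lemma prod_map_letterValue (L : List (↥S × Bool)) :
    (L.map letterValue).prod = FreeGroup.lift (fun s : ↥S => (s : Γ)) (FreeGroup.mk L) := by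
  rw [FreeGroup.lift_mk]
  congr 2
  funext ⟨s, b⟩
  cases b <;> rfl

lemma circuitOf_map_letterValue_of_red {L L' : List (↥S × Bool)} (h : FreeGroup.Red L L')
    (g : Γ) : circuitOf g (L.map letterValue) = circuitOf g (L'.map letterValue) := by
  induction h with
  | refl => rfl
  | tail _ hstep ih =>
    rw [ih]
    obtain @⟨L₁, L₂, x, b⟩ := hstep
    have hinv : letterValue (x, !b) = (letterValue (x, b) : Γ)⁻¹ := by
      cases b <;> simp [letterValue]
    simp only [List.map_append, List.map_cons, hinv, circuitOf_append, circuitOf_cons_inv_cons]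

noncomputable def wordCircuit (g : Γ) (w : FreeGroup ↥S) : Sym2 Γ → ZMod 2 :=
  circuitOf g (wordSteps w)

lemma wordCircuit_mk (g : Γ) (L : List (↥S × Bool)) :
    wordCircuit g (FreeGroup.mk L) = circuitOf g (L.map letterValue) := by
  rw [wordCircuit, wordSteps_eq_map_letterValue, FreeGroup.toWord_mk]
  exact (circuitOf_map_letterValue_of_red FreeGroup.reduce.red g).symm

@[simp]
lemma wordCircuit_one (g : Γ) : wordCircuit g (1 : FreeGroup ↥S) = 0 := by
  rw [← FreeGroup.mk_toWord (x := 1), wordCircuit_mk, FreeGroup.toWord_one]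
  exact circuitOf_nil g

lemma wordCircuit_mul (g : Γ) (w₁ w₂ : FreeGroup ↥S) :
    wordCircuit g (w₁ * w₂) = wordCircuit g w₁ +
      wordCircuit (g * FreeGroup.lift (fun s : ↥S => (s : Γ)) w₁) w₂ := by
  conv_lhs => rw [← FreeGroup.mk_toWord (x := w₁), ← FreeGroup.mk_toWord (x := w₂),
    FreeGroup.mul_mk]
  rw [wordCircuit_mk, List.map_append, circuitOf_append, prod_map_letterValue,
    FreeGroup.mk_toWord, wordCircuit, wordCircuit, wordSteps_eq_map_letterValue,
    wordSteps_eq_map_letterValue]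

lemma wordCircuit_inv (g : Γ) (w : FreeGroup ↥S) :
    wordCircuit (g * FreeGroup.lift (fun s : ↥S => (s : Γ)) w) w⁻¹ = -wordCircuit g w := by
  have h := wordCircuit_mul g w w⁻¹
  rw [mul_inv_cancel, wordCircuit_one] at h
  exact eq_neg_of_add_eq_zero_right h.symm

lemma wordCircuit_mem_span_of_mem_normalClosure {R : Set (FreeGroup ↥S)}
    (hR : ∀ r ∈ R, FreeGroup.lift (fun s : ↥S => (s : Γ)) r = 1)
    {w : FreeGroup ↥S} (hw : w ∈ Subgroup.normalClosure R) (g : Γ) :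
    wordCircuit g w ∈ Submodule.span (ZMod 2)
      {f | ∃ (g : Γ) (r : FreeGroup ↥S), r ∈ R ∧ f = circuitOf g (wordSteps r)} := by
  set φ := FreeGroup.lift (fun s : ↥S => (s : Γ))
  set T := Submodule.span (ZMod 2)
    {f | ∃ (g : Γ) (r : FreeGroup ↥S), r ∈ R ∧ f = circuitOf g (wordSteps r)}
  induction hw using Subgroup.closure_induction generalizing g with
  | mem x hx =>
    obtain ⟨r, hr, hc⟩ := Group.mem_conjugatesOfSet_iff.mp hx
    obtain ⟨u, rfl⟩ := isConj_iff.mp hc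
    have hconj : wordCircuit g (u * r * u⁻¹) = wordCircuit (g * φ u) r := by
      have hu := wordCircuit_inv g u
      rw [wordCircuit_mul, wordCircuit_mul, map_mul, hR r hr, mul_one, hu]
      abel
    rw [hconj]
    exact Submodule.subset_span ⟨g * φ u, r, hr, rfl⟩
  | one => simp [T.zero_mem]
  | mul x y _ _ ihx ihy =>
    rw [wordCircuit_mul]
    exact T.add_mem (ihx g) (ihy _)
  | inv x _ ih =>
    have hinv := wordCircuit_inv (g * (φ x)⁻¹) x
    rw [inv_mul_cancel_right] at hinv
    rw [hinv]
    exact T.neg_mem (ih _)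

end Words

section Cayley

variable {Γ : Type*} [Group Γ] {S : Set Γ}

open Classical in
/-- `S` need not be symmetric, so an edge may only be traversable as an inverse letter. -/
noncomputable def cayleyLetter {u x : Γ} (h : (cayley Γ S).Adj u x) : ↥S × Bool :=
  if hs : u⁻¹ * x ∈ S then (⟨_, hs⟩, true) else (⟨x⁻¹ * u, h.2.resolve_left hs⟩, false)

lemma letterValue_cayleyLetter {u x : Γ} (h : (cayley Γ S).Adj u x) :
    letterValue (cayleyLetter h) = u⁻¹ * x := by
  unfold cayleyLetter
  split_ifs <;> simp [letterValue]

noncomputable def walkWord {u v : Γ} : (cayley Γ S).Walk u v → List (↥S × Bool)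
  | .nil => []
  | .cons h p => cayleyLetter h :: walkWord p

lemma edgeList_map_letterValue_walkWord {u v : Γ} (p : (cayley Γ S).Walk u v) :
    edgeList u ((walkWord p).map letterValue) = p.edges := by
  induction p with
  | nil => rfl
  | cons h p ih =>
    simp only [walkWord, List.map_cons, edgeList, letterValue_cayleyLetter, mul_inv_cancel_left,
      ih, Walk.edges_cons]

lemma lift_mk_walkWord {u v : Γ} (p : (cayley Γ S).Walk u v) :
    FreeGroup.lift (fun s : ↥S => (s : Γ)) (FreeGroup.mk (walkWord p)) = u⁻¹ * v := by
  rw [← prod_map_letterValue]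
  induction p with
  | nil => simp [walkWord]
  | cons h p ih =>
    rw [walkWord, List.map_cons, List.prod_cons, ih, letterValue_cayleyLetter, mul_assoc,
      mul_inv_cancel_left]

lemma walkCircuit_eq_wordCircuit {v : Γ} (p : (cayley Γ S).Walk v v) :
    walkCircuit p = wordCircuit v (FreeGroup.mk (walkWord p)) := by
  funext e
  rw [wordCircuit_mk, walkCircuit, circuitOf, edgeList_map_letterValue_walkWord]

end Cayley

theorem stmt4_general {Γ : Type*} [Group Γ] (S : Set Γ)
    (R : Set (FreeGroup ↥S))
    (hpres : (FreeGroup.lift (fun s : ↥S => (s : Γ))).ker = Subgroup.normalClosure R) :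
    cycleSpace (cayley Γ S) ≤ Submodule.span (ZMod 2)
      {f | ∃ (g : Γ) (r : FreeGroup ↥S), r ∈ R ∧ f = circuitOf g (wordSteps r)} := by
  refine Submodule.span_le.mpr ?_
  rintro _ ⟨v, p, -, rfl⟩
  have hR : ∀ r ∈ R, FreeGroup.lift (fun s : ↥S => (s : Γ)) r = 1 := fun r hr =>
    (hpres ▸ Subgroup.subset_normalClosure hr : r ∈ (FreeGroup.lift _).ker)
  rw [walkCircuit_eq_wordCircuit]
  refine wordCircuit_mem_span_of_mem_normalClosure hR ?_ v
  rw [← hpres, MonoidHom.mem_ker, lift_mk_walkWord, inv_mul_cancel]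

/-- The circuits of the closed walks induced by the relators of any presentation `⟨S ∣ R⟩`
of `Γ` generate the cycle space of the Cayley graph `Cay(Γ, S)`. -/
theorem stmt4 {Γ : Type*} [Group Γ] (S : Set Γ)
    (hsym : ∀ s ∈ S, s⁻¹ ∈ S) (hgen : Subgroup.closure S = ⊤)
    (R : Set (FreeGroup ↥S))
    (hpres : (FreeGroup.lift (fun s : ↥S => (s : Γ))).ker = Subgroup.normalClosure R) :
    cycleSpace (cayley Γ S) ≤ Submodule.span (ZMod 2)
      {f | ∃ (g : Γ) (r : FreeGroup ↥S), r ∈ R ∧ f = circuitOf g (wordSteps r)} :=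
  stmt4_general S R hpres
end

section
/- Let G = Cay⟨b, c, d | b², c², d², (bc)^{2k}, (cbcd)^m⟩ with k, m ≥ 2. Then G has no hinge, i.e., no edge xy of G has the property that G - {x, y} is disconnected. -/
open SimpleGraph

/-- Relators `b²,c²,d²,(bc)^{2k},(cbcd)ᵐ` in the free group on `{b,c,d}`
(`0 ↦ b`, `1 ↦ c`, `2 ↦ d`). -/
def relsV (k m : ℕ) : Set (FreeGroup (Fin 3)) :=
  {FreeGroup.of 0 ^ 2, FreeGroup.of 1 ^ 2, FreeGroup.of 2 ^ 2,
    (FreeGroup.of 0 * FreeGroup.of 1) ^ (2 * k),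
    (FreeGroup.of 1 * FreeGroup.of 0 * FreeGroup.of 1 * FreeGroup.of 2) ^ m}

/-- The Cayley graph of `⟨b,c,d ∣ b²,c²,d²,(bc)^{2k},(cbcd)ᵐ⟩` with respect to `{b,c,d}`. -/
def GV (k m : ℕ) : SimpleGraph (PresentedGroup (relsV k m)) :=
  cayley (PresentedGroup (relsV k m))
    {PresentedGroup.of 0, PresentedGroup.of 1, PresentedGroup.of 2}

/-!
The Cayley graph is vertex-transitive and every edge is `x — x s` with `s ∈ {b, c, d}`, so it
suffices to keep the four other neighbours of `{1, s}` in one component of `G - {1, s}`. Left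
multiplication by the involution `s` preserves `{1, s}`, so it is enough to join the two other
neighbours of `1` to a hub `h`, and `h` to `s h`. These connections are arcs of the two relator
cycles through `1`, of lengths `4k` (word `(bc)^{2k}`) and `4m` (word `(cbcd)^m`). Both cycles are
embedded, as dihedral quotients show: `bc` becomes a rotation of order `2k` in `D_{2k}`, and `cbcd`
a rotation of order `m` in `D_m × {±1}`, where the four positions within one period are told apart
by rotation versus reflection and by the parity of the number of `c`s. Likewise `d` is off the
first cycle (send `b` and `c` to one reflection of `D_m` and `d` to another), and `b` is off the
second (`cbcd` maps to `1` in `D_{2k}`).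
-/

namespace SimpleGraph

variable {V W : Type*} {G : SimpleGraph V} {T : Set V} {u v w : V}

variable (G) in
def ReachableOutside (T : Set V) (u v : V) : Prop :=
  ∃ p : G.Walk u v, ∀ z ∈ p.support, z ∉ T

namespace ReachableOutside

lemma refl (hu : u ∉ T) : G.ReachableOutside T u u :=
  ⟨.nil, by simpa using hu⟩

lemma symm (h : G.ReachableOutside T u v) : G.ReachableOutside T v u := by
  obtain ⟨p, hp⟩ := h
  exact ⟨p.reverse, by simpa using hp⟩

lemma trans (h : G.ReachableOutside T u v) (h' : G.ReachableOutside T v w) :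
    G.ReachableOutside T u w := by
  obtain ⟨p, hp⟩ := h
  obtain ⟨q, hq⟩ := h'
  refine ⟨p.append q, fun z hz => ?_⟩
  rcases Walk.mem_support_append_iff p q |>.mp hz with hz | hz
  exacts [hp z hz, hq z hz]

lemma map {G' : SimpleGraph W} (φ : G ≃g G') (h : G.ReachableOutside T u v) :
    G'.ReachableOutside (φ '' T) (φ u) (φ v) := by
  obtain ⟨p, hp⟩ := h
  refine ⟨p.map φ.toHom, ?_⟩
  simp only [Walk.support_map, List.mem_map, Set.mem_image, not_exists, not_and]
  rintro _ ⟨z, hz, rfl⟩ z' hz' hφ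
  exact hp z hz (φ.injective hφ ▸ hz')

lemma reachable_induce (h : G.ReachableOutside T u v) (hu : u ∉ T) (hv : v ∉ T) :
    (G.induce Tᶜ).Reachable ⟨u, hu⟩ ⟨v, hv⟩ := by
  obtain ⟨p, hp⟩ := h
  exact ⟨p.induce Tᶜ hp⟩

end ReachableOutside

lemma Adj.reachableOutside (h : G.Adj u v) (hu : u ∉ T) (hv : v ∉ T) :
    G.ReachableOutside T u v :=
  ⟨h.toWalk, by simp [hu, hv]⟩

lemma reachableOutside_of_adj_succ {p : ℕ → V} (hp : ∀ l, G.Adj (p l) (p (l + 1))) {i j : ℕ}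
    (hij : i ≤ j) (hT : ∀ l, i ≤ l → l ≤ j → p l ∉ T) :
    G.ReachableOutside T (p i) (p j) := by
  induction j, hij using Nat.le_induction with
  | base => exact .refl (hT i le_rfl le_rfl)
  | succ j hij ih =>
    exact (ih fun l hil hlj => hT l hil (by omega)).trans
      ((hp j).reachableOutside (hT j hij (by omega)) (hT (j + 1) (by omega) le_rfl))

lemma reachableOutside_of_injOn {p : ℕ → V} (hp : ∀ l, G.Adj (p l) (p (l + 1))) {N : ℕ}
    (hinj : Set.InjOn p (Set.Iio N)) {i j : ℕ} (hi : 0 < i) (hij : i ≤ j) (hjN : j < N) {x : V}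
    (hx : ∀ l, i ≤ l → l ≤ j → p l ≠ x) : G.ReachableOutside {p 0, x} (p i) (p j) := by
  refine reachableOutside_of_adj_succ hp hij fun l hil hlj => ?_
  simp only [Set.mem_insert_iff, Set.mem_singleton_iff, not_or]
  exact ⟨(hinj.ne_iff (by simp; omega) (by simp; omega)).mpr (by omega), hx l hil hlj⟩

lemma reachableOutside_pair_of_injOn {p : ℕ → V} (hp : ∀ l, G.Adj (p l) (p (l + 1))) {N : ℕ}
    (hinj : Set.InjOn p (Set.Iio N)) {i j a : ℕ} (hi : 0 < i) (hij : i ≤ j) (hjN : j < N)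
    (haN : a < N) (ha : a < i ∨ j < a) : G.ReachableOutside {p 0, p a} (p i) (p j) :=
  reachableOutside_of_injOn hp hinj hi hij hjN fun l hil hlj =>
    (hinj.ne_iff (by simp; omega) (by simp; omega)).mpr (by omega)

lemma preconnected_induce_compl_of_reachableOutside (hG : G.Preconnected) (v₀ : V)
    (h : ∀ u t, u ∉ T → t ∈ T → G.Adj u t → G.ReachableOutside T u v₀) :
    (G.induce Tᶜ).Preconnected := by
  have key : ∀ u, u ∉ T → G.ReachableOutside T u v₀ := by
    intro u hu
    obtain ⟨p⟩ := hG u v₀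
    induction p with
    | nil => exact .refl hu
    | @cons u w _ hadj p ih =>
      by_cases hw : w ∈ T
      · exact h u w hu hw hadj
      · exact (hadj.reachableOutside hu hw).trans (ih h hw)
  rintro ⟨u, hu⟩ ⟨v, hv⟩
  exact ((key u hu).trans (key v hv).symm).reachable_induce hu hv

end SimpleGraph

section Cayley

variable {M : Type*} [Group M] {S : Set M}

lemma cayley_eq_mulCayley (S : Set M) : cayley M S = mulCayley S := by
  ext u v
  simp [cayley, mulCayley_adj]

lemma mulCayley_adj_mul {s : M} (hs : s ∈ S) (hs1 : s ≠ 1) (g : M) :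
    (mulCayley S).Adj g (g * s) := by
  simp [mulCayley_adj, hs, hs1]

lemma exists_mem_eq_mul_of_mulCayley_adj (hS : ∀ s ∈ S, s⁻¹ ∈ S) {g g' : M}
    (h : (mulCayley S).Adj g g') : ∃ s ∈ S, g' = g * s := by
  rcases ((mulCayley_adj S g g').mp h).2 with h' | h'
  · exact ⟨g⁻¹ * g', h', by group⟩
  · exact ⟨(g'⁻¹ * g)⁻¹, hS _ h', by group⟩

variable (S) in
def mulCayleyMulLeft (a : M) : mulCayley S ≃g mulCayley S where
  toEquiv := Equiv.mulLeft a
  map_rel_iff' := mulCayley_adj_mul_iff_right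

@[simp]
lemma mulCayleyMulLeft_apply (a g : M) : mulCayleyMulLeft S a g = a * g := rfl

lemma mulCayley_preconnected (hS : Subgroup.closure S = ⊤) : (mulCayley S).Preconnected := by
  suffices h : ∀ g, (mulCayley S).Reachable 1 g from fun u v => (h u).symm.trans (h v)
  intro g
  have hg : g ∈ Subgroup.closure S := hS ▸ Subgroup.mem_top g
  induction hg using Subgroup.closure_induction with
  | mem s hs =>
    by_cases hs1 : s = 1
    · rw [hs1]
    · simpa using (mulCayley_adj_mul hs hs1 1).reachable
  | one => rfl
  | mul a b _ _ ha hb => exact ha.trans (by simpa using hb.map (mulCayleyMulLeft S a).toHom)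
  | inv a _ ha => simpa using (ha.map (mulCayleyMulLeft S a⁻¹).toHom).symm

lemma SimpleGraph.ReachableOutside.mulCayley_mul_left {p q v w : M}
    (h : (mulCayley S).ReachableOutside {p, q} v w) (a : M) :
    (mulCayley S).ReachableOutside {a * p, a * q} (a * v) (a * w) := by
  have := h.map (mulCayleyMulLeft S a)
  rwa [Set.image_pair] at this

theorem mulCayley_preconnected_induce_compl_pair (hS : ∀ s ∈ S, s⁻¹ = s)
    (hcl : Subgroup.closure S = ⊤) {s h : M} (hs : s ∈ S)
    (hreach : ∀ t ∈ S, t ≠ s → (mulCayley S).ReachableOutside {1, s} t h)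
    (hsh : (mulCayley S).ReachableOutside {1, s} h (s * h)) (x : M) :
    ((mulCayley S).induce {x, x * s}ᶜ).Preconnected := by
  have translate {v w : M} (hvw : (mulCayley S).ReachableOutside {1, s} v w) :
      (mulCayley S).ReachableOutside {x, x * s} (x * v) (x * w) := by
    simpa using hvw.mulCayley_mul_left x
  -- left multiplication by the involution `s` swaps the two deleted vertices
  have hss : s * s = 1 := by simpa [hS s hs] using mul_inv_cancel s
  have swap {v w : M} (hvw : (mulCayley S).ReachableOutside {1, s} v w) :
      (mulCayley S).ReachableOutside {1, s} (s * v) (s * w) := by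
    simpa [hss, Set.pair_comm] using hvw.mulCayley_mul_left s
  have hSinv : ∀ t ∈ S, t⁻¹ ∈ S := fun t ht => (hS t ht).symm ▸ ht
  refine preconnected_induce_compl_of_reachableOutside (mulCayley_preconnected hcl) (x * h) ?_
  rintro u t hu (rfl | rfl) hadj
  · obtain ⟨t', ht', rfl⟩ := exists_mem_eq_mul_of_mulCayley_adj hSinv hadj.symm
    have ht's : t' ≠ s := by rintro rfl; simp at hu
    exact translate (hreach t' ht' ht's)
  · obtain ⟨t', ht', rfl⟩ := exists_mem_eq_mul_of_mulCayley_adj hSinv hadj.symm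
    have ht's : t' ≠ s := by rintro rfl; simp [mul_assoc, hss] at hu
    simpa [mul_assoc] using translate ((swap (hreach t' ht' ht's)).trans hsh.symm)

end Cayley

section CyclicWord

variable {M : Type*} [Monoid M] {w : List M}

/-- The product of the first `l` letters of the periodic word `w w w ⋯`. -/
def List.cyclicPrefixProd (w : List M) (l : ℕ) : M :=
  w.prod ^ (l / w.length) * (w.take (l % w.length)).prod

@[simp]
lemma List.cyclicPrefixProd_zero (w : List M) : w.cyclicPrefixProd 0 = 1 := by
  simp [List.cyclicPrefixProd]

lemma List.cyclicPrefixProd_succ (hw : w ≠ []) (l : ℕ) :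
    w.cyclicPrefixProd (l + 1) =
      w.cyclicPrefixProd l * w[l % w.length]'(Nat.mod_lt _ (List.length_pos_of_ne_nil hw)) := by
  have hn := List.length_pos_of_ne_nil hw
  have hl := Nat.div_add_mod l w.length
  unfold List.cyclicPrefixProd
  set q := l / w.length
  set r := l % w.length
  have hr : r < w.length := Nat.mod_lt _ hn
  by_cases hr' : r + 1 < w.length
  · rw [show l + 1 = (r + 1) + w.length * q by omega, Nat.add_mul_div_left _ _ hn,
      Nat.add_mul_mod_self_left, Nat.div_eq_of_lt hr', Nat.mod_eq_of_lt hr', zero_add,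
      List.prod_take_succ _ _ hr, mul_assoc]
  · rw [show l + 1 = w.length * (q + 1) by rw [Nat.mul_succ]; omega, Nat.mul_div_cancel_left _ hn,
      Nat.mul_mod_right, List.take_zero, List.prod_nil, mul_one, pow_succ, mul_assoc,
      ← List.prod_take_succ _ _ hr, show r + 1 = w.length by omega, List.take_length]

lemma mulCayley_adj_cyclicPrefixProd {G : Type*} [Group G] {S : Set G} {w : List G}
    (hw : w ≠ []) (hS : ∀ a ∈ w, a ∈ S ∧ a ≠ 1) (l : ℕ) :
    (mulCayley S).Adj (w.cyclicPrefixProd l) (w.cyclicPrefixProd (l + 1)) := by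
  rw [List.cyclicPrefixProd_succ hw]
  exact mulCayley_adj_mul (hS _ (List.getElem_mem _)).1 (hS _ (List.getElem_mem _)).2 _

end CyclicWord

lemma ZMod.natCast_inj_of_lt {n a b : ℕ} (ha : a < n) (hb : b < n) :
    (a : ZMod n) = b ↔ a = b :=
  ⟨fun h => by simpa [ZMod.val_cast_of_lt ha, ZMod.val_cast_of_lt hb] using congrArg ZMod.val h,
    congrArg _⟩

lemma ZMod.natCast_ne_zero_of_lt {n a : ℕ} (h0 : 0 < a) (h : a < n) : (a : ZMod n) ≠ 0 :=
  fun ha => h0.ne' ((ZMod.natCast_inj_of_lt h (h0.trans h)).mp (by simpa using ha))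

@[simp]
lemma DihedralGroup.sr_ne_one {n : ℕ} (i : ZMod n) : (sr i : DihedralGroup n) ≠ 1 := by
  simp [one_def, -r_zero]

@[simp]
lemma DihedralGroup.one_ne_sr {n : ℕ} (i : ZMod n) : (1 : DihedralGroup n) ≠ sr i :=
  (sr_ne_one i).symm

namespace BCDGroup

open DihedralGroup

variable {k m : ℕ}

abbrev Γ (k m : ℕ) := PresentedGroup (relsV k m)

def b : Γ k m := PresentedGroup.of 0
def c : Γ k m := PresentedGroup.of 1
def d : Γ k m := PresentedGroup.of 2

lemma mk_eq_one {r : FreeGroup (Fin 3)} (hr : r ∈ relsV k m) :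
    PresentedGroup.mk (relsV k m) r = 1 :=
  PresentedGroup.one_of_mem hr

@[simp]
lemma b_mul_b : (b : Γ k m) * b = 1 := by
  have h := mk_eq_one (k := k) (m := m) (r := .of 0 ^ 2) (by simp [relsV])
  simpa [sq, b, PresentedGroup.of, map_mul, map_pow] using h

@[simp]
lemma c_mul_c : (c : Γ k m) * c = 1 := by
  have h := mk_eq_one (k := k) (m := m) (r := .of 1 ^ 2) (by simp [relsV])
  simpa [sq, c, PresentedGroup.of, map_mul, map_pow] using h

@[simp]
lemma d_mul_d : (d : Γ k m) * d = 1 := by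
  have h := mk_eq_one (k := k) (m := m) (r := .of 2 ^ 2) (by simp [relsV])
  simpa [sq, d, PresentedGroup.of, map_mul, map_pow] using h

lemma bc_pow : ((b : Γ k m) * c) ^ (2 * k) = 1 := by
  have h := mk_eq_one (k := k) (m := m) (r := (.of 0 * .of 1) ^ (2 * k)) (by simp [relsV])
  simpa [b, c, PresentedGroup.of, map_mul, map_pow] using h

lemma cbcd_pow : ((c : Γ k m) * b * c * d) ^ m = 1 := by
  have h := mk_eq_one (k := k) (m := m) (r := (.of 1 * .of 0 * .of 1 * .of 2) ^ m)
    (by simp [relsV])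
  simpa [b, c, d, PresentedGroup.of, map_mul, map_pow] using h

@[simp] lemma b_inv : (b : Γ k m)⁻¹ = b := inv_eq_of_mul_eq_one_right b_mul_b
@[simp] lemma c_inv : (c : Γ k m)⁻¹ = c := inv_eq_of_mul_eq_one_right c_mul_c
@[simp] lemma d_inv : (d : Γ k m)⁻¹ = d := inv_eq_of_mul_eq_one_right d_mul_d

@[simp] lemma b_mul_b_mul (g : Γ k m) : b * (b * g) = g := by rw [← mul_assoc, b_mul_b, one_mul]
@[simp] lemma c_mul_c_mul (g : Γ k m) : c * (c * g) = g := by rw [← mul_assoc, c_mul_c, one_mul]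

def gens (k m : ℕ) : Set (Γ k m) := {b, c, d}

lemma GV_eq_mulCayley : GV k m = mulCayley (gens k m) :=
  cayley_eq_mulCayley _

lemma inv_eq_self_of_mem_gens {s : Γ k m} (hs : s ∈ gens k m) : s⁻¹ = s := by
  rcases hs with rfl | rfl | rfl <;> simp

lemma closure_gens : Subgroup.closure (gens k m) = ⊤ := by
  rw [← PresentedGroup.closure_range_of]
  congr 1
  ext g
  simp [gens, b, c, d, Fin.exists_fin_succ, eq_comm]

section Lift

variable {H : Type*} [Group H]

def lift (β γ δ : H) (hβ : β * β = 1) (hγ : γ * γ = 1) (hδ : δ * δ = 1)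
    (hβγ : (β * γ) ^ (2 * k) = 1) (hγβγδ : (γ * β * γ * δ) ^ m = 1) : Γ k m →* H :=
  PresentedGroup.toGroup (f := ![β, γ, δ]) <| by
    rintro r (rfl | rfl | rfl | rfl | rfl) <;> simpa [sq]

variable {β γ δ : H} {hβ : β * β = 1} {hγ : γ * γ = 1} {hδ : δ * δ = 1}
  {hβγ : (β * γ) ^ (2 * k) = 1} {hγβγδ : (γ * β * γ * δ) ^ m = 1}

@[simp]
lemma lift_b : lift β γ δ hβ hγ hδ hβγ hγβγδ b = β :=
  PresentedGroup.toGroup.of _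
@[simp]
lemma lift_c : lift β γ δ hβ hγ hδ hβγ hγβγδ c = γ :=
  PresentedGroup.toGroup.of _
@[simp]
lemma lift_d : lift β γ δ hβ hγ hδ hβγ hγβγδ d = δ :=
  PresentedGroup.toGroup.of _

end Lift

def toDihedralBC : Γ k m →* DihedralGroup (2 * k) :=
  lift (sr 0) (sr 1) (sr 2) (sr_mul_self _) (sr_mul_self _) (sr_mul_self _)
    (by simp) (by simp [one_add_one_eq_two])

def toDihedralCD : Γ k m →* DihedralGroup m × ℤˣ :=
  lift (sr 0, 1) (1, -1) (sr 1, 1) (by simp) (by simp) (by simp)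
    (by simp [pow_mul, sq]) (by simp)

def toDihedralD : Γ k m →* DihedralGroup m :=
  lift (sr 0) (sr 0) (sr 1) (sr_mul_self _) (sr_mul_self _) (sr_mul_self _)
    (by simp) (by simp)

lemma b_ne_one : (b : Γ k m) ≠ 1 := fun h => by
  simpa [toDihedralBC] using congrArg toDihedralBC h
lemma c_ne_one : (c : Γ k m) ≠ 1 := fun h => by
  simpa [toDihedralBC] using congrArg toDihedralBC h
lemma d_ne_one : (d : Γ k m) ≠ 1 := fun h => by
  simpa [toDihedralBC] using congrArg toDihedralBC h

def bcCycle : ℕ → Γ k m := [b, c].cyclicPrefixProd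
def cbcdCycle : ℕ → Γ k m := [c, b, c, d].cyclicPrefixProd

lemma GV_adj_bcCycle (l : ℕ) : (GV k m).Adj (bcCycle l) (bcCycle (l + 1)) :=
  GV_eq_mulCayley ▸ mulCayley_adj_cyclicPrefixProd (by simp)
    (by simp [gens, b_ne_one, c_ne_one]) l

lemma GV_adj_cbcdCycle (l : ℕ) : (GV k m).Adj (cbcdCycle l) (cbcdCycle (l + 1)) :=
  GV_eq_mulCayley ▸ mulCayley_adj_cyclicPrefixProd (by simp)
    (by simp [gens, b_ne_one, c_ne_one, d_ne_one]) l

lemma bcCycle_injOn : Set.InjOn (bcCycle (k := k) (m := m)) (Set.Iio (4 * k)) := by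
  intro l hl l' hl' h
  simp only [Set.mem_Iio] at hl hl'
  have h' := congrArg toDihedralBC h
  rcases Nat.mod_two_eq_zero_or_one l with hl2 | hl2 <;>
  rcases Nat.mod_two_eq_zero_or_one l' with hl2' | hl2' <;>
  simp [bcCycle, List.cyclicPrefixProd, toDihedralBC, hl2, hl2'] at h' <;>
  have := (ZMod.natCast_inj_of_lt (by omega) (by omega)).mp h' <;> omega

lemma cbcdCycle_injOn : Set.InjOn (cbcdCycle (k := k) (m := m)) (Set.Iio (4 * m)) := by
  intro l hl l' hl' h
  simp only [Set.mem_Iio] at hl hl'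
  have h' := congrArg toDihedralCD h
  have h4 : l % 4 = 0 ∨ l % 4 = 1 ∨ l % 4 = 2 ∨ l % 4 = 3 := by omega
  have h4' : l' % 4 = 0 ∨ l' % 4 = 1 ∨ l' % 4 = 2 ∨ l' % 4 = 3 := by omega
  rcases h4 with h4 | h4 | h4 | h4 <;> rcases h4' with h4' | h4' | h4' | h4' <;>
  simp [cbcdCycle, List.cyclicPrefixProd, toDihedralCD, h4, h4'] at h'
  all_goals have := (ZMod.natCast_inj_of_lt (by omega) (by omega)).mp h'; omega

lemma d_notMem_range_bcCycle (hm : 2 ≤ m) : d ∉ Set.range (bcCycle (k := k) (m := m)) := by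
  rintro ⟨l, hl⟩
  have h' := congrArg toDihedralD hl
  rcases Nat.mod_two_eq_zero_or_one l with hl2 | hl2 <;>
  simp [bcCycle, List.cyclicPrefixProd, toDihedralD, hl2] at h'
  exact ZMod.natCast_ne_zero_of_lt (n := m) (a := 1) one_pos hm (by exact_mod_cast h'.symm)

lemma b_notMem_range_cbcdCycle (hk : 2 ≤ k) : b ∉ Set.range (cbcdCycle (k := k) (m := m)) := by
  rintro ⟨l, hl⟩
  have h' := congrArg toDihedralBC hl
  have h4 : l % 4 = 0 ∨ l % 4 = 1 ∨ l % 4 = 2 ∨ l % 4 = 3 := by omega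
  rcases h4 with h4 | h4 | h4 | h4 <;>
  simp [cbcdCycle, List.cyclicPrefixProd, toDihedralBC, h4] at h' <;> norm_num at h'
  · exact ZMod.natCast_ne_zero_of_lt (n := 2 * k) (a := 1) one_pos (by omega)
      (by exact_mod_cast h')
  · exact ZMod.natCast_ne_zero_of_lt (n := 2 * k) (a := 2) two_pos (by omega)
      (by exact_mod_cast h')

lemma bc_pow_pred (hk : 1 ≤ k) : ((b : Γ k m) * c) ^ (2 * k - 1) = c * b := by
  have h : ((b : Γ k m) * c) ^ (2 * k - 1) * (b * c) = 1 := by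
    rw [← pow_succ, Nat.sub_add_cancel (by omega), bc_pow]
  simp [eq_inv_of_mul_eq_one_left h]

lemma cbcd_pow_pred (hm : 1 ≤ m) : ((c : Γ k m) * b * c * d) ^ (m - 1) = d * c * b * c := by
  have h : ((c : Γ k m) * b * c * d) ^ (m - 1) * (c * b * c * d) = 1 := by
    rw [← pow_succ, Nat.sub_add_cancel hm, cbcd_pow]
  rw [eq_inv_of_mul_eq_one_left h]
  simp [mul_assoc]

@[simp] lemma bcCycle_zero : bcCycle 0 = (1 : Γ k m) := List.cyclicPrefixProd_zero _
lemma bcCycle_one : bcCycle 1 = (b : Γ k m) := by simp [bcCycle, List.cyclicPrefixProd]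
lemma bcCycle_two : bcCycle 2 = (b : Γ k m) * c := by simp [bcCycle, List.cyclicPrefixProd]

lemma bcCycle_four_mul_sub_two (hk : 1 ≤ k) : bcCycle (4 * k - 2) = (c : Γ k m) * b := by
  simp [bcCycle, List.cyclicPrefixProd, show (4 * k - 2) / 2 = 2 * k - 1 by omega,
    show (4 * k - 2) % 2 = 0 by omega, bc_pow_pred hk]

lemma bcCycle_four_mul_sub_one (hk : 1 ≤ k) : bcCycle (4 * k - 1) = (c : Γ k m) := by
  simp [bcCycle, List.cyclicPrefixProd, show (4 * k - 1) / 2 = 2 * k - 1 by omega,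
    show (4 * k - 1) % 2 = 1 by omega, bc_pow_pred hk, mul_assoc]

@[simp] lemma cbcdCycle_zero : cbcdCycle 0 = (1 : Γ k m) := List.cyclicPrefixProd_zero _
lemma cbcdCycle_one : cbcdCycle 1 = (c : Γ k m) := by simp [cbcdCycle, List.cyclicPrefixProd]
lemma cbcdCycle_two : cbcdCycle 2 = (c : Γ k m) * b := by
  simp [cbcdCycle, List.cyclicPrefixProd]

lemma cbcdCycle_four_mul_sub_two (hm : 1 ≤ m) : cbcdCycle (4 * m - 2) = (d : Γ k m) * c := by
  have h := cbcd_pow_pred (k := k) hm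
  simp only [mul_assoc] at h
  simp [cbcdCycle, List.cyclicPrefixProd, show (4 * m - 2) / 4 = m - 1 by omega,
    show (4 * m - 2) % 4 = 2 by omega, h, mul_assoc]

lemma cbcdCycle_four_mul_sub_one (hm : 1 ≤ m) : cbcdCycle (4 * m - 1) = (d : Γ k m) := by
  have h := cbcd_pow_pred (k := k) hm
  simp only [mul_assoc] at h
  simp [cbcdCycle, List.cyclicPrefixProd, show (4 * m - 1) / 4 = m - 1 by omega,
    show (4 * m - 1) % 4 = 3 by omega, h, mul_assoc]

lemma preconnected_induce_compl_mul_b (hk : 2 ≤ k) (hm : 2 ≤ m) (x : Γ k m) :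
    ((GV k m).induce {x, x * b}ᶜ).Preconnected := by
  have hcd : (GV k m).ReachableOutside {1, b} c d := by
    simpa [cbcdCycle_one, cbcdCycle_four_mul_sub_one (by omega : 1 ≤ m)] using
      reachableOutside_of_injOn GV_adj_cbcdCycle cbcdCycle_injOn (N := 4 * m) (i := 1)
        (j := 4 * m - 1) (x := b) one_pos (by omega) (by omega)
        fun l _ _ h => b_notMem_range_cbcdCycle hk ⟨l, h⟩
  have hbc : (GV k m).ReachableOutside {1, b} (b * c) c := by
    simpa [bcCycle_one, bcCycle_two, bcCycle_four_mul_sub_one (by omega : 1 ≤ k)] using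
      reachableOutside_pair_of_injOn GV_adj_bcCycle bcCycle_injOn (N := 4 * k) (i := 2)
        (j := 4 * k - 1) (a := 1) two_pos (by omega) (by omega) (by omega) (by omega)
  rw [GV_eq_mulCayley] at *
  refine mulCayley_preconnected_induce_compl_pair (fun _ => inv_eq_self_of_mem_gens) closure_gens
    (by simp [gens]) ?_ hbc.symm x
  rintro t (rfl | rfl | rfl) ht
  exacts [absurd rfl ht, hbc.symm.trans hbc, hcd.symm]

lemma preconnected_induce_compl_mul_c (hk : 2 ≤ k) (hm : 2 ≤ m) (x : Γ k m) :
    ((GV k m).induce {x, x * c}ᶜ).Preconnected := by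
  have hbcb : (GV k m).ReachableOutside {1, c} b (c * b) := by
    simpa [bcCycle_one, bcCycle_four_mul_sub_two (by omega : 1 ≤ k),
      bcCycle_four_mul_sub_one (by omega : 1 ≤ k)] using
      reachableOutside_pair_of_injOn GV_adj_bcCycle bcCycle_injOn (N := 4 * k) (i := 1)
        (j := 4 * k - 2) (a := 4 * k - 1) one_pos (by omega) (by omega) (by omega) (by omega)
  have hcbd : (GV k m).ReachableOutside {1, c} (c * b) d := by
    simpa [cbcdCycle_one, cbcdCycle_two, cbcdCycle_four_mul_sub_one (by omega : 1 ≤ m)] using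
      reachableOutside_pair_of_injOn GV_adj_cbcdCycle cbcdCycle_injOn (N := 4 * m) (i := 2)
        (j := 4 * m - 1) (a := 1) two_pos (by omega) (by omega) (by omega) (by omega)
  rw [GV_eq_mulCayley] at *
  refine mulCayley_preconnected_induce_compl_pair (fun _ => inv_eq_self_of_mem_gens) closure_gens
    (by simp [gens]) ?_ hbcb x
  rintro t (rfl | rfl | rfl) ht
  exacts [hbcb.trans hbcb.symm, absurd rfl ht, (hbcb.trans hcbd).symm]

lemma preconnected_induce_compl_mul_d (hk : 2 ≤ k) (hm : 2 ≤ m) (x : Γ k m) :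
    ((GV k m).induce {x, x * d}ᶜ).Preconnected := by
  have hbc : (GV k m).ReachableOutside {1, d} b c := by
    simpa [bcCycle_one, bcCycle_four_mul_sub_one (by omega : 1 ≤ k)] using
      reachableOutside_of_injOn GV_adj_bcCycle bcCycle_injOn (N := 4 * k) (i := 1) (j := 4 * k - 1)
        (x := d) one_pos (by omega) (by omega) fun l _ _ h => d_notMem_range_bcCycle hm ⟨l, h⟩
  have hcdc : (GV k m).ReachableOutside {1, d} c (d * c) := by
    simpa [cbcdCycle_one, cbcdCycle_four_mul_sub_two (by omega : 1 ≤ m),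
      cbcdCycle_four_mul_sub_one (by omega : 1 ≤ m)] using
      reachableOutside_pair_of_injOn GV_adj_cbcdCycle cbcdCycle_injOn (N := 4 * m) (i := 1)
        (j := 4 * m - 2) (a := 4 * m - 1) one_pos (by omega) (by omega) (by omega) (by omega)
  rw [GV_eq_mulCayley] at *
  refine mulCayley_preconnected_induce_compl_pair (fun _ => inv_eq_self_of_mem_gens) closure_gens
    (by simp [gens]) ?_ hcdc x
  rintro t (rfl | rfl | rfl) ht
  exacts [hbc, hcdc.trans hcdc.symm, absurd rfl ht]

end BCDGroup

/-- For `k, m ≥ 2`, the Cayley graph of `⟨b,c,d ∣ b²,c²,d²,(bc)^{2k},(cbcd)ᵐ⟩` has no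
hinge. -/
theorem stmt17 (k m : ℕ) (hk : 2 ≤ k) (hm : 2 ≤ m) :
    ∀ x y : PresentedGroup (relsV k m), (GV k m).Adj x y →
      ¬ Separates (GV k m) ({x, y} : Set (PresentedGroup (relsV k m))) := by
  intro x y hxy hsep
  rw [BCDGroup.GV_eq_mulCayley] at hxy
  obtain ⟨s, hs, rfl⟩ := exists_mem_eq_mul_of_mulCayley_adj
    (fun s hs => (BCDGroup.inv_eq_self_of_mem_gens hs).symm ▸ hs) hxy
  rcases hs with rfl | rfl | rfl
  exacts [hsep (BCDGroup.preconnected_induce_compl_mul_b hk hm x),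
    hsep (BCDGroup.preconnected_induce_compl_mul_c hk hm x),
    hsep (BCDGroup.preconnected_induce_compl_mul_d hk hm x)]
end
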